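/- Let V ⊆ Bool × Bool × Bool be the set of valuations {(true,true,true), (true,false,false), (false,true,false)} of three propositions (A,B,C). Then { c : (a,b,c) ∈ V, a = true and b = true } = {true}, while { c : (a,b,c) ∈ V, a = true } ≠ {true} and { c : (a,b,c) ∈ V, b = true } ≠ {true}. In words (the two-switches example): there is a set of possible valuations under which the Boolean-feasibility conditional 'If you throw both switch S and switch T, the motor will start' holds, yet neither 'If you throw switch S the motor will start' nor 'If you throw switch T the motor will start' holds; so the inference from the former to the disjunction of the latter two is invalid for Boolean-feasibility conditionals. -/
import Mathlib

theorem two_switches_example :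
    let V : Set (Bool × Bool × Bool) :=
      {(true, true, true), (true, false, false), (false, true, false)}
    ({c : Bool | ∃ a b : Bool, (a, b, c) ∈ V ∧ a = true ∧ b = true} = {true}) ∧
    ({c : Bool | ∃ a b : Bool, (a, b, c) ∈ V ∧ a = true} ≠ {true}) ∧
    ({c : Bool | ∃ a b : Bool, (a, b, c) ∈ V ∧ b = true} ≠ {true}) := by
  intro V
  refine ⟨?_, ?_, ?_⟩
  · ext c
    simp only [Set.mem_setOf_eq, Set.mem_singleton_iff, V, Set.mem_insert_iff]
    constructor
    · rintro ⟨a, b, h, rfl, rfl⟩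
      simp_all [Prod.ext_iff]
    · rintro rfl
      exact ⟨true, true, Or.inl rfl, rfl, rfl⟩
  · intro h
    have : false ∈ ({true} : Set Bool) := by
      rw [← h]
      exact ⟨true, false, Or.inr (Or.inl rfl), rfl⟩
    simp at this
  · intro h
    have : false ∈ ({true} : Set Bool) := by
      rw [← h]
      exact ⟨false, true, Or.inr (Or.inr rfl), rfl⟩
    simp at this
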